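/- Replay protection: let h : Tx → B be injective, and let (u, t) be a valid ledger trace (u : ℕ → Set (OutputRef × O), t : ℕ → Tx) whose initial state u 0 is well-founded. Then for all indices i < j, t i ≠ t j. -/

import Mathlib

/-- Output references spent by a transaction: keys of its inputs. -/
def getORefs {B O Tx : Type*} (inputs : Tx → Set ((B × ℕ) × O)) (t : Tx) :
    Set (B × ℕ) :=
  {r | ∃ o, (r, o) ∈ inputs t}

/-- UTxO entries created by a transaction: the `i`-th output of `t` keyed by `(h t, i)`. -/
def mkOuts {B O Tx : Type*} (outputs : Tx → List O) (hsh : Tx → B) (t : Tx) :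
    Set ((B × ℕ) × O) :=
  {p | ∃ i : ℕ, ∃ o, (outputs t)[i]? = some o ∧ p = ((hsh t, i), o)}

/-- A UTxO set is well-founded if the hash part of each of its keys comes from a
transaction with empty inputs. -/
def WellFoundedUTxO {B O Tx : Type*} (inputs : Tx → Set ((B × ℕ) × O)) (hsh : Tx → B)
    (u₀ : Set ((B × ℕ) × O)) : Prop :=
  ∀ b n o, ((b, n), o) ∈ u₀ → ∃ t₀ : Tx, hsh t₀ = b ∧ inputs t₀ = ∅

/-- The valid-trace conditions at step `k`: nonempty inputs, inputs present in the
current state, and the UTxO update rule. -/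
def ValidStep {B O Tx : Type*} (inputs : Tx → Set ((B × ℕ) × O))
    (outputs : Tx → List O) (hsh : Tx → B)
    (u : ℕ → Set ((B × ℕ) × O)) (t : ℕ → Tx) (k : ℕ) : Prop :=
  inputs (t k) ≠ ∅ ∧ inputs (t k) ⊆ u k ∧
    u (k + 1) = {p | p ∈ u k ∧ p.1 ∉ getORefs inputs (t k)} ∪ mkOuts outputs hsh (t k)

/-- A valid ledger trace: the valid-trace conditions hold at every step. -/
def ValidLedgerTrace {B O Tx : Type*} (inputs : Tx → Set ((B × ℕ) × O))
    (outputs : Tx → List O) (hsh : Tx → B)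
    (u : ℕ → Set ((B × ℕ) × O)) (t : ℕ → Tx) : Prop :=
  ∀ k, ValidStep inputs outputs hsh u t k

/-!
Suppose `t i = t j` with `i < j` and `j` minimal. An input reference `r` of `t i` is spent at
step `i`, so before step `j` it can only reappear as an output of some `t k` with `i ≤ k < j` and
`hsh (t k)` equal to the hash part of `r`. That hash was minted either by a transaction without
inputs, which cannot be `t k`, or by some `t m` with `m < i`; injectivity of `hsh` then gives
`t m = t k`, against the minimality of `j`. So `r` is absent from `u j` and `t j` cannot spend it.
-/

lemma fst_fst_of_mem_mkOuts {B O Tx : Type*} {outputs : Tx → List O} {hsh : Tx → B} {tx : Tx}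
    {p : (B × ℕ) × O} (hp : p ∈ mkOuts outputs hsh tx) : p.1.1 = hsh tx := by
  obtain ⟨i, o, -, rfl⟩ := hp
  rfl

namespace ValidLedgerTrace

variable {B O Tx : Type*} {inputs : Tx → Set ((B × ℕ) × O)} {outputs : Tx → List O}
  {hsh : Tx → B} {u : ℕ → Set ((B × ℕ) × O)} {t : ℕ → Tx}

lemma mem_of_mem_succ (htrace : ValidLedgerTrace inputs outputs hsh u t) {k : ℕ}
    {p : (B × ℕ) × O} (hp : p ∈ u (k + 1)) (hne : hsh (t k) ≠ p.1.1) :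
    p ∈ u k ∧ p.1 ∉ getORefs inputs (t k) := by
  rw [(htrace k).2.2] at hp
  rcases hp with hold | hnew
  · exact hold
  · exact absurd (fst_fst_of_mem_mkOuts hnew).symm hne

lemma exists_source_of_mem (htrace : ValidLedgerTrace inputs outputs hsh u t)
    (hwf : WellFoundedUTxO inputs hsh (u 0)) {k : ℕ} {p : (B × ℕ) × O} (hp : p ∈ u k) :
    (∃ t₀, hsh t₀ = p.1.1 ∧ inputs t₀ = ∅) ∨ ∃ m < k, hsh (t m) = p.1.1 := by
  induction k with
  | zero => exact Or.inl (hwf _ _ _ hp)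
  | succ k ih =>
    by_cases hk : hsh (t k) = p.1.1
    · exact Or.inr ⟨k, k.lt_succ_self, hk⟩
    · rcases ih (htrace.mem_of_mem_succ hp hk).1 with hempty | ⟨m, hm, hsrc⟩
      · exact Or.inl hempty
      · exact Or.inr ⟨m, hm.trans k.lt_succ_self, hsrc⟩

lemma not_mem_of_spent (htrace : ValidLedgerTrace inputs outputs hsh u t) {r : B × ℕ}
    {i j : ℕ} (hspent : r ∈ getORefs inputs (t i)) (hij : i < j)
    (hfresh : ∀ k, i ≤ k → k < j → hsh (t k) ≠ r.1) (o : O) : (r, o) ∉ u j := by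
  induction j, hij using Nat.le_induction with
  | base =>
    exact fun hr => (htrace.mem_of_mem_succ hr (hfresh i le_rfl i.lt_succ_self)).2 hspent
  | succ k hik ih =>
    exact fun hr => ih (fun l hil hlk => hfresh l hil (hlk.trans k.lt_succ_self))
      (htrace.mem_of_mem_succ hr (hfresh k (Nat.le_of_succ_le hik) k.lt_succ_self)).1

lemma ne_of_lt_of_forall_lt_ne (hinj : Function.Injective hsh)
    (htrace : ValidLedgerTrace inputs outputs hsh u t) (hwf : WellFoundedUTxO inputs hsh (u 0))
    {i j : ℕ} (hij : i < j) (hprev : ∀ m k, m < k → k < j → t m ≠ t k) : t i ≠ t j := by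
  intro hrep
  obtain ⟨⟨r, o⟩, hin⟩ := Set.nonempty_iff_ne_empty.mpr (htrace i).1
  have hfresh : ∀ k, i ≤ k → k < j → hsh (t k) ≠ r.1 := by
    intro k hik hkj hk
    rcases htrace.exists_source_of_mem hwf ((htrace i).2.1 hin) with ⟨t₀, ht₀, hempty⟩ | ⟨m, hmi, hm⟩
    · exact (htrace k).1 (hinj (hk.trans ht₀.symm) ▸ hempty)
    · exact hprev m k (hmi.trans_le hik) hkj (hinj (hm.trans hk.symm))
  exact htrace.not_mem_of_spent ⟨o, hin⟩ hij hfresh o ((htrace j).2.1 (hrep ▸ hin))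

end ValidLedgerTrace

/-- Replay protection: along a valid ledger trace starting from a well-founded
initial state, no transaction can occur twice. -/
theorem replay_protection {B O Tx : Type*}
    (inputs : Tx → Set ((B × ℕ) × O)) (outputs : Tx → List O) (hsh : Tx → B)
    (hinj : Function.Injective hsh)
    (u : ℕ → Set ((B × ℕ) × O)) (t : ℕ → Tx)
    (htrace : ValidLedgerTrace inputs outputs hsh u t)
    (hwf : WellFoundedUTxO inputs hsh (u 0)) :
    ∀ i j : ℕ, i < j → t i ≠ t j := by
  intro i j
  induction j using Nat.strong_induction_on generalizing i with
  | _ j ih =>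
    exact fun hij => htrace.ne_of_lt_of_forall_lt_ne hinj hwf hij
      fun m k hmk hkj => ih k hkj m hmk
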